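/- The arrival process converges in distribution: as n → ∞, the law of ξ_n converges weakly to the Bernoulli distribution of a random variable ξ with ℙ(ξ = 1) = a_0 / (1 − Σ_{i=1}^∞ a_i) and ℙ(ξ = 0) = 1 − a_0 / (1 − Σ_{i=1}^∞ a_i). -/

import Mathlib

/-!
The means `p n = 𝔼 ξ n` satisfy, by the tower property, the renewal equation
`p n = a 0 + ∑_{1 ≤ i < n} a (n - i) p i`. Its solution is nondecreasing and bounded
by the fixed point `L = a 0 / (1 - S)` of `x ↦ a 0 + S x`, where `S = ∑_{i ≥ 1} a i < 1`; its limit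
`ℓ ≤ L` satisfies `a 0 + S ℓ ≤ ℓ` after letting the truncated recursion pass to the limit, so
`ℓ = L`. Since `ξ n` takes only the values `0` and `1`, `𝔼 f (ξ n) = f 0 + (f 1 - f 0) p n` is
affine in `p n`, and so is the integral of `f` against the limiting Bernoulli law.
-/

open MeasureTheory Filter Topology Set

theorem Finset.sum_Icc_one_eq_sum_range_succ {M : Type*} [AddCommMonoid M] (a : ℕ → M) (K : ℕ) :
    ∑ m ∈ Finset.Icc 1 K, a m = ∑ j ∈ Finset.range K, a (j + 1) := by
  rw [← Finset.Ico_add_one_right_eq_Icc, Finset.sum_Ico_eq_sum_range]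
  simp only [add_tsub_cancel_right, add_comm]

theorem Finset.sum_Icc_one_reflect {M : Type*} [AddCommMonoid M] (f : ℕ → ℕ → M) (k : ℕ) :
    ∑ i ∈ Finset.Icc 1 k, f (k + 1 - i) i = ∑ i ∈ Finset.Icc 1 k, f i (k + 1 - i) := by
  refine Finset.sum_nbij' (fun i => k + 1 - i) (fun i => k + 1 - i) ?_ ?_ ?_ ?_ ?_ <;>
    intro i hi <;> simp only [Finset.mem_Icc] at hi ⊢
  any_goals omega
  rw [show k + 1 - (k + 1 - i) = i by omega]

section Renewal

variable {a q : ℕ → ℝ} (ha : ∀ i, 0 ≤ a i)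
  (hq : ∀ k, q k = a 0 + ∑ m ∈ Finset.Icc 1 k, a m * q (k - m))
include ha hq

theorem renewal_nonneg (k : ℕ) : 0 ≤ q k := by
  induction k using Nat.strong_induction_on with
  | _ k ih =>
    rw [hq k]
    refine add_nonneg (ha 0) (Finset.sum_nonneg fun m hm => ?_)
    exact mul_nonneg (ha m) (ih _ (by simp only [Finset.mem_Icc] at hm; omega))

theorem renewal_le {L : ℝ} (hL : ∀ K, a 0 + (∑ m ∈ Finset.Icc 1 K, a m) * L ≤ L) (k : ℕ) :
    q k ≤ L := by
  induction k using Nat.strong_induction_on with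
  | _ k ih =>
    calc q k = a 0 + ∑ m ∈ Finset.Icc 1 k, a m * q (k - m) := hq k
      _ ≤ a 0 + ∑ m ∈ Finset.Icc 1 k, a m * L := by
        gcongr with m hm
        · exact ha m
        · exact ih _ (by simp only [Finset.mem_Icc] at hm; omega)
      _ ≤ L := by rw [← Finset.sum_mul]; exact hL k

theorem renewal_monotone : Monotone q := by
  refine monotone_nat_of_le_succ fun k => ?_
  induction k using Nat.strong_induction_on with
  | _ k ih =>
    rw [hq k, hq (k + 1), Finset.sum_Icc_succ_top (by omega : 1 ≤ k + 1)]
    have hterm : ∀ m ∈ Finset.Icc 1 k, a m * q (k - m) ≤ a m * q (k + 1 - m) := by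
      intro m hm
      simp only [Finset.mem_Icc] at hm
      rw [show k + 1 - m = k - m + 1 by omega]
      exact mul_le_mul_of_nonneg_left (ih _ (by omega)) (ha m)
    have hlast : 0 ≤ a (k + 1) * q (k + 1 - (k + 1)) := mul_nonneg (ha _) (renewal_nonneg ha hq _)
    linarith [Finset.sum_le_sum hterm]

/-- Truncating the recursion at `K` and using monotonicity: `q (k + K) ≥ a 0 + (∑_{m ≤ K} a m) q k`. -/
theorem renewal_limit_ge {ℓ : ℝ} (hlim : Tendsto q atTop (𝓝 ℓ)) (K : ℕ) :
    a 0 + (∑ m ∈ Finset.Icc 1 K, a m) * ℓ ≤ ℓ := by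
  have hshift (k : ℕ) : a 0 + (∑ m ∈ Finset.Icc 1 K, a m) * q k ≤ q (k + K) := by
    rw [hq (k + K), Finset.sum_mul]
    gcongr a 0 + ?_
    calc ∑ m ∈ Finset.Icc 1 K, a m * q k
        ≤ ∑ m ∈ Finset.Icc 1 K, a m * q (k + K - m) := by
          gcongr with m hm
          · exact ha m
          · exact renewal_monotone ha hq (by simp only [Finset.mem_Icc] at hm; omega)
      _ ≤ ∑ m ∈ Finset.Icc 1 (k + K), a m * q (k + K - m) :=
          Finset.sum_le_sum_of_subset_of_nonneg (Finset.Icc_subset_Icc_right (by omega))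
            fun m _ _ => mul_nonneg (ha m) (renewal_nonneg ha hq _)
  exact le_of_tendsto_of_tendsto' ((hlim.const_mul _).const_add _)
    (hlim.comp (tendsto_add_atTop_nat K)) hshift

theorem tendsto_renewal (hs : Summable fun i => a (i + 1)) (hS : ∑' i, a (i + 1) < 1) :
    Tendsto q atTop (𝓝 (a 0 / (1 - ∑' i, a (i + 1)))) := by
  set S := ∑' i, a (i + 1)
  set L := a 0 / (1 - S)
  have hS_pos : 0 < 1 - S := by linarith
  have hL_fixed : a 0 + S * L = L := by
    simp only [L]; field_simp; rw [sub_add_cancel, mul_one]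
  have hpartial (K : ℕ) : ∑ m ∈ Finset.Icc 1 K, a m ≤ S := by
    rw [Finset.sum_Icc_one_eq_sum_range_succ]
    exact hs.sum_le_tsum _ fun i _ => ha _
  have hpartial_tendsto : Tendsto (fun K => ∑ m ∈ Finset.Icc 1 K, a m) atTop (𝓝 S) := by
    simpa only [Finset.sum_Icc_one_eq_sum_range_succ] using hs.hasSum.tendsto_sum_nat
  have hle : ∀ k, q k ≤ L := renewal_le ha hq fun K => by
    have : 0 ≤ L := div_nonneg (ha 0) hS_pos.le
    nlinarith [hpartial K]
  have hlim := tendsto_atTop_ciSup (renewal_monotone ha hq) ⟨L, forall_mem_range.2 hle⟩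
  have hfixed_le : a 0 + S * ⨆ k, q k ≤ ⨆ k, q k :=
    le_of_tendsto ((hpartial_tendsto.mul_const _).const_add _)
      (Eventually.of_forall (renewal_limit_ge ha hq hlim))
  have hL_le : L ≤ ⨆ k, q k := by
    rw [div_le_iff₀ hS_pos]
    linarith
  rwa [le_antisymm (ciSup_le hle) hL_le] at hlim

end Renewal

theorem tendsto_of_renewal_from_one {a p : ℕ → ℝ} (ha : ∀ i, 0 ≤ a i)
    (hs : Summable fun i => a (i + 1)) (hS : ∑' i, a (i + 1) < 1)
    (hp : ∀ n, 1 ≤ n → p n = a 0 + ∑ i ∈ Finset.Icc 1 (n - 1), a (n - i) * p i) :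
    Tendsto p atTop (𝓝 (a 0 / (1 - ∑' i, a (i + 1)))) := by
  refine (tendsto_add_atTop_iff_nat 1).mp (tendsto_renewal ha (fun k => ?_) hs hS)
  rw [hp (k + 1) (by omega), Nat.add_sub_cancel,
    Finset.sum_Icc_one_reflect (fun j i => a j * p i)]
  refine congrArg _ (Finset.sum_congr rfl fun m hm => ?_)
  simp only [Finset.mem_Icc] at hm
  rw [show k + 1 - m = k - m + 1 by omega]

section ZeroOne

variable {Ω : Type*} [MeasurableSpace Ω] {μ : Measure Ω} {X : Ω → ℝ}

theorem integrable_of_eq_zero_or_one [IsFiniteMeasure μ] (hX : Measurable X)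
    (h01 : ∀ ω, X ω = 0 ∨ X ω = 1) : Integrable X μ :=
  .of_bound hX.aestronglyMeasurable 1 <| ae_of_all _ fun ω => by
    rcases h01 ω with h | h <;> simp [h]

theorem integral_comp_of_eq_zero_or_one [IsProbabilityMeasure μ] (hX : Measurable X)
    (h01 : ∀ ω, X ω = 0 ∨ X ω = 1) (f : ℝ → ℝ) :
    ∫ ω, f (X ω) ∂μ = f 0 + (f 1 - f 0) * ∫ ω, X ω ∂μ := by
  have hf (ω : Ω) : f (X ω) = f 0 + (f 1 - f 0) * X ω := by
    rcases h01 ω with h | h <;> rw [h] <;> ring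
  simp only [hf]
  rw [integral_add (integrable_const _) ((integrable_of_eq_zero_or_one hX h01).const_mul _),
    integral_const_mul, integral_const, probReal_univ, one_smul]

end ZeroOne

theorem integral_ofReal_smul_dirac_add_ofReal_smul_dirac {α E : Type*} [MeasurableSpace α]
    [MeasurableSingletonClass α] [NormedAddCommGroup E] [NormedSpace ℝ E] [CompleteSpace E]
    {s t : ℝ} (hs : 0 ≤ s) (ht : 0 ≤ t) (x y : α) (f : α → E) :
    ∫ z, f z ∂(ENNReal.ofReal s • Measure.dirac x + ENNReal.ofReal t • Measure.dirac y) =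
      s • f x + t • f y := by
  rw [integral_add_measure
      ((integrable_dirac enorm_lt_top).smul_measure ENNReal.ofReal_ne_top)
      ((integrable_dirac enorm_lt_top).smul_measure ENNReal.ofReal_ne_top),
    integral_smul_measure, integral_smul_measure, integral_dirac, integral_dirac,
    ENNReal.toReal_ofReal hs, ENNReal.toReal_ofReal ht]

theorem integral_dthp_eq {Ω : Type*} [MeasurableSpace Ω] (μ : Measure Ω) [IsProbabilityMeasure μ]
    (a : ℕ → ℝ) (ξ : ℕ → Ω → ℝ) (ha₀ : 0 ≤ a 0)
    (hmeas : ∀ n, Measurable (ξ n))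
    (hval : ∀ n, 1 ≤ n → ∀ ω, ξ n ω = 0 ∨ ξ n ω = 1)
    (hinit : μ {ω | ξ 1 ω = 1} = ENNReal.ofReal (a 0))
    (hcond : ∀ n, 2 ≤ n →
      μ[ξ n | ⨆ i ∈ Finset.Icc 1 (n - 1), MeasurableSpace.comap (ξ i) Real.measurableSpace]
        =ᵐ[μ] fun ω => a 0 + ∑ i ∈ Finset.Icc 1 (n - 1), a (n - i) * ξ i ω)
    (n : ℕ) (hn : 1 ≤ n) :
    ∫ ω, ξ n ω ∂μ = a 0 + ∑ i ∈ Finset.Icc 1 (n - 1), a (n - i) * ∫ ω, ξ i ω ∂μ := by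
  obtain rfl | hn2 := hn.eq_or_lt
  · rw [integral_of_ae_eq_zero_or_one (hmeas 1).aemeasurable (ae_of_all _ (hval 1 le_rfl)),
      measureReal_def, hinit, ENNReal.toReal_ofReal ha₀]
    simp
  have hint : ∀ i ∈ Finset.Icc 1 (n - 1), Integrable (fun ω => a (n - i) * ξ i ω) μ :=
    fun i hi => (integrable_of_eq_zero_or_one (hmeas i)
      (hval i (Finset.mem_Icc.1 hi).1)).const_mul _
  have hle : ⨆ i ∈ Finset.Icc 1 (n - 1), MeasurableSpace.comap (ξ i) Real.measurableSpace
      ≤ ‹MeasurableSpace Ω› := iSup₂_le fun i _ => (hmeas i).comap_le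
  rw [← integral_condExp hle, integral_congr_ae (hcond n hn2),
    integral_add (integrable_const _) (integrable_finsetSum _ hint), integral_finsetSum _ hint]
  simp only [integral_const, probReal_univ, one_smul, integral_const_mul]

theorem dthp_arrival_converges_in_distribution_general
    {Ω : Type*} [MeasurableSpace Ω] (μ : Measure Ω) [IsProbabilityMeasure μ]
    (a : ℕ → ℝ) (ξ : ℕ → Ω → ℝ)
    (ha_pos : ∀ i, 0 < a i)
    (ha_sum : Summable a)
    (ha_lt_one : ∑' i, a i < 1)
    (hmeas : ∀ n, Measurable (ξ n))
    (hval : ∀ n, 1 ≤ n → ∀ ω, ξ n ω = 0 ∨ ξ n ω = 1)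
    (hinit : μ {ω | ξ 1 ω = 1} = ENNReal.ofReal (a 0))
    (hcond : ∀ n, 2 ≤ n →
      μ[ξ n | ⨆ i ∈ Finset.Icc 1 (n - 1), MeasurableSpace.comap (ξ i) Real.measurableSpace]
        =ᵐ[μ] fun ω => a 0 + ∑ i ∈ Finset.Icc 1 (n - 1), a (n - i) * ξ i ω)
    :
    ∀ f : ℝ → ℝ, Continuous f → (∃ C, ∀ x, |f x| ≤ C) →
      Tendsto (fun n => ∫ ω, f (ξ n ω) ∂μ) atTop
        (𝓝 (∫ x, f x ∂(ENNReal.ofReal (a 0 / (1 - ∑' i, a (i + 1))) • Measure.dirac (1 : ℝ) +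
              ENNReal.ofReal (1 - a 0 / (1 - ∑' i, a (i + 1))) • Measure.dirac (0 : ℝ)))) := by
  intro f _ _
  set L := a 0 / (1 - ∑' i, a (i + 1))
  have ha : ∀ i, 0 ≤ a i := fun i => (ha_pos i).le
  have hs : Summable fun i => a (i + 1) := (summable_nat_add_iff 1).mpr ha_sum
  have hsplit : ∑' i, a i = a 0 + ∑' i, a (i + 1) := ha_sum.tsum_eq_zero_add
  have hS : 0 < 1 - ∑' i, a (i + 1) := by linarith [ha 0]
  have hL_le_one : L ≤ 1 := by rw [div_le_one hS]; linarith
  have hmean : Tendsto (fun n => ∫ ω, ξ n ω ∂μ) atTop (𝓝 L) :=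
    tendsto_of_renewal_from_one ha hs (by linarith)
      (integral_dthp_eq μ a ξ (ha 0) hmeas hval hinit hcond)
  rw [integral_ofReal_smul_dirac_add_ofReal_smul_dirac (div_nonneg (ha 0) hS.le)
    (sub_nonneg.2 hL_le_one), smul_eq_mul, smul_eq_mul,
    show L * f 1 + (1 - L) * f 0 = f 0 + (f 1 - f 0) * L by ring]
  refine ((hmean.const_mul (f 1 - f 0)).const_add (f 0)).congr' ?_
  filter_upwards [eventually_ge_atTop 1] with n hn
  exact (integral_comp_of_eq_zero_or_one (hmeas n) (hval n hn) f).symm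

theorem dthp_arrival_converges_in_distribution
    {Ω : Type*} [MeasurableSpace Ω] (μ : Measure Ω) [IsProbabilityMeasure μ]
    (a : ℕ → ℝ) (ξ : ℕ → Ω → ℝ)
    (ha_pos : ∀ i, 0 < a i)
    (ha_sum : Summable a)
    (ha_lt_one : ∑' i, a i < 1)
    (ha_moment : Summable (fun i : ℕ => (i : ℝ) * a i))
    (hmeas : ∀ n, Measurable (ξ n))
    (hval : ∀ n, 1 ≤ n → ∀ ω, ξ n ω = 0 ∨ ξ n ω = 1)
    (hinit : μ {ω | ξ 1 ω = 1} = ENNReal.ofReal (a 0))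
    (hcond : ∀ n, 2 ≤ n →
      μ[ξ n | ⨆ i ∈ Finset.Icc 1 (n - 1), MeasurableSpace.comap (ξ i) Real.measurableSpace]
        =ᵐ[μ] fun ω => a 0 + ∑ i ∈ Finset.Icc 1 (n - 1), a (n - i) * ξ i ω)
    :
    ∀ f : ℝ → ℝ, Continuous f → (∃ C, ∀ x, |f x| ≤ C) →
      Tendsto (fun n => ∫ ω, f (ξ n ω) ∂μ) atTop
        (𝓝 (∫ x, f x ∂(ENNReal.ofReal (a 0 / (1 - ∑' i, a (i + 1))) • Measure.dirac (1 : ℝ) +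
              ENNReal.ofReal (1 - a 0 / (1 - ∑' i, a (i + 1))) • Measure.dirac (0 : ℝ)))) :=
  dthp_arrival_converges_in_distribution_general μ a ξ ha_pos ha_sum ha_lt_one hmeas hval hinit
    hcond
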